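/- arXiv:1412.5645 — 4 statements merged into one kernel-verified Lean document; each statement's English description precedes it below -/
import Mathlib

section
/- The function f(u) = ∫_{-u}^∞ (z+u) e^{-z²/2} dz satisfies: f(u)/u is non-increasing for u > 0. -/
/-!
Write `A u = ∫_{-u}^∞ z φ(z) dz` and `B u = ∫_{-u}^∞ φ(z) dz`, so that `f u / u = A u / u + B u`.
Since `A' u = -u φ(-u)` and `B' u = φ(-u)`, the boundary terms cancel and
`(f u / u)' = -A u / u²`. For the Gaussian `φ z = e^{-z²/2}` one has `A u = e^{-u²/2} > 0`.
-/

open Real MeasureTheory Set Filter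

lemma hasDerivAt_integral_Ioi_neg {f : ℝ → ℝ} (hf : Continuous f) (hfi : Integrable f) (u : ℝ) :
    HasDerivAt (fun v => ∫ z in Ioi (-v), f z) (f (-u)) u := by
  have hsplit : (fun v => ∫ z in Ioi (-v), f z)
      = fun v => -(∫ z in (0 : ℝ)..(-v), f z) + ∫ z in Ioi (0 : ℝ), f z := by
    ext v
    rw [← intervalIntegral.integral_symm,
      intervalIntegral.integral_interval_add_Ioi hfi.integrableOn hfi.integrableOn]
  have hlower : HasDerivAt (fun v => ∫ z in (0 : ℝ)..(-v), f z) (f (-u) * -1) u :=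
    (hf.integral_hasStrictDerivAt 0 (-u)).hasDerivAt.comp u (hasDerivAt_neg u)
  rw [hsplit]
  simpa using hlower.neg.add_const (∫ z in Ioi (0 : ℝ), f z)

lemma hasDerivAt_integral_Ioi_neg_add_mul_div {φ : ℝ → ℝ} (hφ : Continuous φ)
    (hφi : Integrable φ) (hzφi : Integrable fun z => z * φ z) {u : ℝ} (hu : u ≠ 0) :
    HasDerivAt (fun v => (∫ z in Ioi (-v), (z + v) * φ z) / v)
      (-(∫ z in Ioi (-u), z * φ z) / u ^ 2) u := by
  have hsplit : (fun v => (∫ z in Ioi (-v), (z + v) * φ z) / v)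
      = fun v => ((∫ z in Ioi (-v), z * φ z) + v * ∫ z in Ioi (-v), φ z) / v := by
    ext v
    rw [← integral_const_mul, ← integral_add hzφi.integrableOn (hφi.integrableOn.const_mul v)]
    simp only [add_mul]
  have hA := hasDerivAt_integral_Ioi_neg (f := fun z => z * φ z) (by fun_prop) hzφi u
  have hB := hasDerivAt_integral_Ioi_neg hφ hφi u
  rw [hsplit]
  refine ((hA.add ((hasDerivAt_id' u).mul hB)).fun_div (hasDerivAt_id' u) hu).congr_deriv ?_
  simp only [Pi.add_apply, Pi.mul_apply]
  field_simp
  ring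

lemma integrable_exp_neg_sq_div_two : Integrable fun z : ℝ => exp (-z ^ 2 / 2) := by
  simpa [div_eq_inv_mul] using integrable_exp_neg_mul_sq (by norm_num : (0 : ℝ) < 1 / 2)

lemma integrable_mul_exp_neg_sq_div_two : Integrable fun z : ℝ => z * exp (-z ^ 2 / 2) := by
  simpa [div_eq_inv_mul] using integrable_mul_exp_neg_mul_sq (by norm_num : (0 : ℝ) < 1 / 2)

lemma integral_Ioi_mul_exp_neg_sq_div_two (a : ℝ) :
    ∫ z in Ioi a, z * exp (-z ^ 2 / 2) = exp (-a ^ 2 / 2) := by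
  have hderiv (x : ℝ) : HasDerivAt (fun z => -exp (-z ^ 2 / 2)) (x * exp (-x ^ 2 / 2)) x :=
    (((hasDerivAt_pow 2 x).fun_neg.div_const 2).exp).fun_neg.congr_deriv (by simp; ring)
  have hlim : Tendsto (fun z : ℝ => -exp (-z ^ 2 / 2)) atTop (nhds 0) := by
    simpa using (tendsto_exp_atBot.comp <| (tendsto_neg_atBot_iff.mpr
      (tendsto_pow_atTop two_ne_zero)).atBot_div_const two_pos).neg
  rw [integral_Ioi_of_hasDerivAt_of_tendsto' (fun x _ => hderiv x)
    integrable_mul_exp_neg_sq_div_two.integrableOn hlim]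
  simp

/-- The function `f(u) = ∫_{-u}^∞ (z+u) e^{-z²/2} dz` satisfies: `f(u)/u` is
non-increasing on `(0,∞)`. -/
theorem stmt3 :
    AntitoneOn (fun u : ℝ =>
      (∫ z in Set.Ioi (-u), (z + u) * Real.exp (-z^2 / 2)) / u) (Set.Ioi 0) := by
  have hderiv (u : ℝ) (hu : u ∈ Ioi 0) :
      HasDerivAt (fun v => (∫ z in Ioi (-v), (z + v) * exp (-z ^ 2 / 2)) / v)
        (-exp (-u ^ 2 / 2) / u ^ 2) u := by
    simpa [integral_Ioi_mul_exp_neg_sq_div_two] using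
      hasDerivAt_integral_Ioi_neg_add_mul_div (by fun_prop)
        integrable_exp_neg_sq_div_two integrable_mul_exp_neg_sq_div_two (ne_of_gt hu)
  refine antitoneOn_of_hasDerivWithinAt_nonpos (f' := fun u => -exp (-u ^ 2 / 2) / u ^ 2)
    (convex_Ioi 0)
    (fun u hu => (hderiv u hu).continuousAt.continuousWithinAt) ?_ fun u _ => ?_
  · simpa only [interior_Ioi] using fun u hu => (hderiv u hu).hasDerivWithinAt
  · exact div_nonpos_of_nonpos_of_nonneg (neg_nonpos.mpr (exp_pos _).le) (sq_nonneg u)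
end

section
/- Let 0 < u ≤ 1 and v > 0 and d ≥ 1. There exists a constant C > 0 such that for all y, y' > 0: (y/(y+y'))·(y+y')^{2u} − y^{2u}·(y/(y+y'))^{vd/2} ≤ C·[(y y')^u·(y/(y+y'))^{vd/2} + (y y')^u·(y'/(y+y'))^{vd/2}]. -/
open Real

/-!
Put `s = y + y'`, `a = y / s`, `b = y' / s`, so `a + b = 1`. Both sides are `s ^ (2u)` times
their values at `(a, b)`. With `α = vd/2` and `β = 2u + α` the normalized inequality follows from
`a - a ^ β = a (1 - a ^ (β - 1)) ≤ max (β - 1) 1 · ab ≤ max (β - 1) 1 · (ab) ^ u`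
together with `1 ≤ 2 ^ α (a ^ α + b ^ α)`, since one of `a, b` is at least `1/2`.
-/

lemma one_sub_rpow_le_max_mul {t : ℝ} (γ : ℝ) (ht0 : 0 ≤ t) (ht1 : t ≤ 1) :
    1 - t ^ γ ≤ max γ 1 * (1 - t) := by
  rcases le_total γ 1 with hγ | hγ
  · have : t ≤ t ^ γ := self_le_rpow_of_le_one ht0 ht1 hγ
    nlinarith [le_max_right γ 1]
  · have bernoulli : 1 + γ * (t - 1) ≤ (1 + (t - 1)) ^ γ :=
      one_add_mul_self_le_rpow_one_add (by linarith) hγ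
    rw [add_sub_cancel] at bernoulli
    rw [max_eq_left hγ]
    linarith

lemma one_le_two_rpow_mul_rpow_add_rpow {α a b : ℝ} (hα : 0 ≤ α) (ha : 0 ≤ a) (hb : 0 ≤ b)
    (hab : a + b = 1) : 1 ≤ 2 ^ α * (a ^ α + b ^ α) := by
  have half_le : ∀ x y : ℝ, 1 / 2 ≤ x → 0 ≤ y → 1 ≤ 2 ^ α * (x ^ α + y ^ α) := fun x y hx hy =>
    calc 1 ≤ (2 * x) ^ α := one_le_rpow (by linarith) hα
      _ = 2 ^ α * x ^ α := mul_rpow zero_le_two (by linarith)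
      _ ≤ 2 ^ α * (x ^ α + y ^ α) := by gcongr; exact le_add_of_nonneg_right (by positivity)
  rcases le_total (1 / 2) a with h | h
  · exact half_le a b h hb
  · rw [add_comm]; exact half_le b a (by linarith) ha

lemma self_sub_rpow_le_of_add_eq_one {u α a b : ℝ} (hu : u ≤ 1) (hα : 0 ≤ α)
    (ha : 0 < a) (hb : 0 < b) (hab : a + b = 1) :
    a - a ^ (2 * u + α) ≤
      max (2 * u + α - 1) 1 * 2 ^ α * ((a * b) ^ u * a ^ α + (a * b) ^ u * b ^ α) := by
  set M := max (2 * u + α - 1) 1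
  have factor : a - a ^ (2 * u + α) = a * (1 - a ^ (2 * u + α - 1)) := by
    conv_lhs => rw [← add_sub_cancel 1 (2 * u + α), rpow_add ha, rpow_one]
    ring
  have hab_le : a * b ≤ (a * b) ^ u :=
    self_le_rpow_of_le_one (by positivity) (by nlinarith) hu
  calc a - a ^ (2 * u + α) ≤ a * (M * b) := by
        rw [factor, eq_sub_of_add_eq' hab]
        gcongr
        exact one_sub_rpow_le_max_mul _ ha.le (by linarith)
    _ = M * (a * b) * 1 := by ring
    _ ≤ M * (a * b) ^ u * (2 ^ α * (a ^ α + b ^ α)) := by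
        gcongr
        exact one_le_two_rpow_mul_rpow_add_rpow hα ha.le hb.le hab
    _ = M * 2 ^ α * ((a * b) ^ u * a ^ α + (a * b) ^ u * b ^ α) := by ring

lemma mul_rpow_sub_le_of_add_eq_one {u α a b s : ℝ} (hu : u ≤ 1) (hα : 0 ≤ α)
    (ha : 0 < a) (hb : 0 < b) (hab : a + b = 1) (hs : 0 < s) :
    a * s ^ (2 * u) - (a * s) ^ (2 * u) * a ^ α ≤
      max (2 * u + α - 1) 1 * 2 ^ α *
        ((a * s * (b * s)) ^ u * a ^ α + (a * s * (b * s)) ^ u * b ^ α) := by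
  have scale_prod : (a * s * (b * s)) ^ u = (a * b) ^ u * s ^ (2 * u) := by
    rw [show a * s * (b * s) = a * b * (s * s) by ring, mul_rpow (by positivity) (by positivity),
      mul_rpow hs.le hs.le, ← rpow_add hs, two_mul]
  calc a * s ^ (2 * u) - (a * s) ^ (2 * u) * a ^ α
      = (a - a ^ (2 * u + α)) * s ^ (2 * u) := by
        rw [mul_rpow ha.le hs.le, rpow_add ha]; ring
    _ ≤ max (2 * u + α - 1) 1 * 2 ^ α * ((a * b) ^ u * a ^ α + (a * b) ^ u * b ^ α) *
          s ^ (2 * u) := by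
        gcongr
        exact self_sub_rpow_le_of_add_eq_one hu hα ha hb hab
    _ = _ := by rw [scale_prod]; ring

theorem stmt4_general (u v : ℝ) (hu1 : u ≤ 1) (hv : 0 < v) (d : ℕ) :
    ∃ C > (0:ℝ), ∀ y y' : ℝ, 0 < y → 0 < y' →
      (y / (y + y')) * (y + y') ^ (2*u) - y ^ (2*u) * (y / (y + y')) ^ (v * d / 2)
        ≤ C * ((y * y') ^ u * (y / (y + y')) ^ (v * d / 2)
              + (y * y') ^ u * (y' / (y + y')) ^ (v * d / 2)) := by
  have hα : 0 ≤ v * d / 2 := by positivity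
  refine ⟨max (2 * u + v * d / 2 - 1) 1 * 2 ^ (v * d / 2),
    mul_pos (lt_max_of_lt_right one_pos) (by positivity), fun y y' hy hy' => ?_⟩
  have hs : 0 < y + y' := by linarith
  have hab : y / (y + y') + y' / (y + y') = 1 := by rw [← add_div, div_self hs.ne']
  simpa only [div_mul_cancel₀ _ hs.ne'] using
    mul_rpow_sub_le_of_add_eq_one hu1 hα (div_pos hy hs) (div_pos hy' hs) hab hs

/-- For `0 < u ≤ 1`, `v > 0`, `d ≥ 1`, there is `C > 0` such that for all `y, y' > 0`:
`(y/(y+y'))(y+y')^{2u} − y^{2u}(y/(y+y'))^{vd/2}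
  ≤ C[(yy')^u (y/(y+y'))^{vd/2} + (yy')^u (y'/(y+y'))^{vd/2}]`. -/
theorem stmt4 (u v : ℝ) (hu0 : 0 < u) (hu1 : u ≤ 1) (hv : 0 < v) (d : ℕ) (hd : 1 ≤ d) :
    ∃ C > (0:ℝ), ∀ y y' : ℝ, 0 < y → 0 < y' →
      (y / (y + y')) * (y + y') ^ (2*u) - y ^ (2*u) * (y / (y + y')) ^ (v * d / 2)
        ≤ C * ((y * y') ^ u * (y / (y + y')) ^ (v * d / 2)
              + (y * y') ^ u * (y' / (y + y')) ^ (v * d / 2)) :=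
  stmt4_general u v hu1 hv d
end

section
/- For v ∈ ℝᵈ, r > 0, h > 0, let D(v) = {x ∈ ℝᵈ : |x| ≥ r and ∃ t ∈ [0,h] with |x + tv| ≤ r}, and let Vol(S_{d−1}) denote the volume of the unit ball in ℝ^{d−1}. Then there is a dimensional constant C such that, for |v|h ≥ 2r, Vol(D(v)) ≤ |v|·r^{d−1}·Vol(S_{d−1})·h + C r^d. -/
open MeasureTheory

open scoped RealInnerProductSpace in
/-- Orthogonal-projection bound: removing the component along a unit vector
does not increase the norm. -/
lemma proj_bound_aux {E : Type*} [NormedAddCommGroup E] [InnerProductSpace ℝ E]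
    {e : E} (he : ‖e‖ = 1) (x : E) : ‖x - ⟪e, x⟫ • e‖ ≤ ‖x‖ := by
  have h1 : ‖x - ⟪e, x⟫ • e‖ ^ 2 = ‖x‖ ^ 2 - 2 * ⟪x, ⟪e, x⟫ • e⟫ + ‖⟪e, x⟫ • e‖ ^ 2 := by
    rw [← norm_sub_sq_real]
  have h2 : ⟪x, ⟪e, x⟫ • e⟫ = ⟪e, x⟫ ^ 2 := by
    rw [real_inner_smul_right, real_inner_comm]; ring
  have h3 : ‖⟪e, x⟫ • e‖ ^ 2 = ⟪e, x⟫ ^ 2 := by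
    rw [norm_smul, he, mul_one, Real.norm_eq_abs, sq_abs]
  nlinarith [norm_nonneg (x - ⟪e, x⟫ • e), norm_nonneg x]

open scoped RealInnerProductSpace in
/-- Volume of the slab-capsule `{u : ⟪e₀,u⟫ ∈ [a,b], ‖u - ⟪e₀,u⟫e₀‖ ≤ r}` where
`e₀` is the first coordinate vector. -/
lemma slab_volume (n : ℕ) (a b r : ℝ) (hr : 0 ≤ r) :
    volume {u : EuclideanSpace ℝ (Fin (n + 1)) |
        ⟪(EuclideanSpace.single 0 1 : EuclideanSpace ℝ (Fin (n + 1))), u⟫ ∈ Set.Icc a b ∧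
        ‖u - ⟪(EuclideanSpace.single 0 1 : EuclideanSpace ℝ (Fin (n + 1))), u⟫ •
            (EuclideanSpace.single 0 1 : EuclideanSpace ℝ (Fin (n + 1)))‖ ≤ r}
      = ENNReal.ofReal (b - a) *
          (ENNReal.ofReal (r ^ n) * volume (Metric.ball (0 : EuclideanSpace ℝ (Fin n)) 1)) := by
  have hcoord : ∀ u : EuclideanSpace ℝ (Fin (n + 1)),
      ⟪(EuclideanSpace.single 0 1 : EuclideanSpace ℝ (Fin (n + 1))), u⟫ = u 0 := by
    intro u
    simp [EuclideanSpace.inner_single_left]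
  -- rewrite the set in coordinates
  have hset : {u : EuclideanSpace ℝ (Fin (n + 1)) |
        ⟪(EuclideanSpace.single 0 1 : EuclideanSpace ℝ (Fin (n + 1))), u⟫ ∈ Set.Icc a b ∧
        ‖u - ⟪(EuclideanSpace.single 0 1 : EuclideanSpace ℝ (Fin (n + 1))), u⟫ •
            (EuclideanSpace.single 0 1 : EuclideanSpace ℝ (Fin (n + 1)))‖ ≤ r}
      = {u : EuclideanSpace ℝ (Fin (n + 1)) |
          u 0 ∈ Set.Icc a b ∧ ∑ i : Fin n, (u i.succ) ^ 2 ≤ r ^ 2} := by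
    ext u
    rw [Set.mem_setOf_eq, Set.mem_setOf_eq, hcoord]
    refine and_congr_right fun _ => ?_
    have hnorm : ‖u - u 0 • (EuclideanSpace.single 0 1 : EuclideanSpace ℝ (Fin (n + 1)))‖
        = Real.sqrt (∑ i : Fin n, (u i.succ) ^ 2) := by
      rw [EuclideanSpace.norm_eq]
      congr 1
      rw [Fin.sum_univ_succ]
      simp [EuclideanSpace.single_apply, Fin.succ_ne_zero, sq_abs]
    rw [hnorm]
    nth_rewrite 1 [← Real.sqrt_sq hr]
    exact Real.sqrt_le_sqrt_iff (by positivity)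
  rw [hset]
  -- move to the product space ℝ × (Fin n → ℝ)
  have hc0 : Continuous fun u : EuclideanSpace ℝ (Fin (n + 1)) => u 0 :=
    (EuclideanSpace.proj (0 : Fin (n + 1))).continuous
  have hcs : Continuous fun u : EuclideanSpace ℝ (Fin (n + 1)) =>
      ∑ i : Fin n, (u i.succ) ^ 2 := by
    refine continuous_finset_sum _ fun i _ => ?_
    exact ((EuclideanSpace.proj (i.succ : Fin (n + 1))).continuous).pow 2
  have hmeas : MeasurableSet {u : EuclideanSpace ℝ (Fin (n + 1)) |
      u 0 ∈ Set.Icc a b ∧ ∑ i : Fin n, (u i.succ) ^ 2 ≤ r ^ 2} :=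
    (measurableSet_Icc.preimage hc0.measurable).inter
      (measurableSet_le hcs.measurable measurable_const)
  rw [← ((EuclideanSpace.volume_preserving_symm_measurableEquiv_toLp (Fin (n + 1))).symm).measure_preimage
    hmeas.nullMeasurableSet]
  have hset2 : (MeasurableEquiv.toLp 2 (Fin (n + 1) → ℝ)) ⁻¹'
        {u : EuclideanSpace ℝ (Fin (n + 1)) |
          u 0 ∈ Set.Icc a b ∧ ∑ i : Fin n, (u i.succ) ^ 2 ≤ r ^ 2}
      = (MeasurableEquiv.piFinSuccAbove (fun _ : Fin (n + 1) => ℝ) 0) ⁻¹'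
          (Set.Icc a b ×ˢ {w : Fin n → ℝ | ∑ i : Fin n, (w i) ^ 2 ≤ r ^ 2}) := by
    ext u
    simp [MeasurableEquiv.toLp_apply, MeasurableEquiv.piFinSuccAbove,
      Fin.insertNthEquiv, Set.mem_prod, Fin.succAbove, Fin.tail]
  rw [MeasurableEquiv.symm_symm, hset2, (volume_preserving_piFinSuccAbove (fun _ : Fin (n + 1) => ℝ) 0).measure_preimage
    ((measurableSet_Icc.prod (measurableSet_le (by fun_prop) measurable_const)).nullMeasurableSet),
    Measure.volume_eq_prod, Measure.prod_prod, Real.volume_Icc]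
  congr 1
  -- the (Fin n → ℝ) factor is a closed ball of radius r
  have hball : {w : Fin n → ℝ | ∑ i : Fin n, (w i) ^ 2 ≤ r ^ 2}
      = (MeasurableEquiv.toLp 2 (Fin n → ℝ)) ⁻¹'
          Metric.closedBall (0 : EuclideanSpace ℝ (Fin n)) r := by
    ext w
    simp only [Set.mem_setOf_eq, Set.mem_preimage, Metric.mem_closedBall, dist_zero_right]
    have hw : ‖(MeasurableEquiv.toLp 2 (Fin n → ℝ)) w‖
        = Real.sqrt (∑ i : Fin n, (w i) ^ 2) := by
      rw [EuclideanSpace.norm_eq]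
      congr 1
      refine Finset.sum_congr rfl fun i _ => ?_
      simp [MeasurableEquiv.toLp_apply, sq_abs]
    rw [hw]
    nth_rewrite 2 [← Real.sqrt_sq hr]
    exact (Real.sqrt_le_sqrt_iff (by positivity)).symm
  rw [hball, ← MeasurableEquiv.symm_symm (MeasurableEquiv.toLp 2 (Fin n → ℝ)), ((EuclideanSpace.volume_preserving_symm_measurableEquiv_toLp (Fin n)).symm).measure_preimage
    measurableSet_closedBall.nullMeasurableSet,
    Measure.addHaar_closedBall _ _ hr, finrank_euclideanSpace_fin]

open scoped RealInnerProductSpace in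
/-- For `D(v) = {x : |x| ≥ r, ∃ t ∈ [0,h], |x + tv| ≤ r}` and `|v|h ≥ 2r`, the
Lebesgue measure of `D(v)` is at most
`|v| r^{d−1} Vol(S_{d−1}) h + C r^d`, where `Vol(S_{d−1})` is the volume of the
unit ball of `ℝ^{d−1}` and `C` is a dimensional constant. -/
theorem stmt7 (d : ℕ) (hd : 1 ≤ d) :
    ∃ C > (0:ℝ), ∀ (v : EuclideanSpace ℝ (Fin d)) (r h : ℝ), 0 < r → 0 < h →
      2 * r ≤ ‖v‖ * h →
      volume {x : EuclideanSpace ℝ (Fin d) |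
          r ≤ ‖x‖ ∧ ∃ t ∈ Set.Icc (0:ℝ) h, ‖x + t • v‖ ≤ r}
        ≤ ENNReal.ofReal (‖v‖ * r ^ (d - 1) *
            (volume (Metric.ball (0 : EuclideanSpace ℝ (Fin (d - 1))) 1)).toReal * h
            + C * r ^ d) := by
  obtain ⟨n, rfl⟩ : ∃ n, d = n + 1 := ⟨d - 1, (Nat.succ_pred_eq_of_pos hd).symm⟩
  simp only [Nat.add_sub_cancel]
  set ω : ℝ := (volume (Metric.ball (0 : EuclideanSpace ℝ (Fin n)) 1)).toReal with hωdef
  have hωfin : volume (Metric.ball (0 : EuclideanSpace ℝ (Fin n)) 1) ≠ ⊤ :=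
    measure_ball_lt_top.ne
  have hω : 0 < ω :=
    ENNReal.toReal_pos (Metric.measure_ball_pos volume _ one_pos).ne' hωfin
  refine ⟨2 * ω, by positivity, ?_⟩
  intro v r h hr hh hvh
  have hvpos : 0 < ‖v‖ := by
    by_contra hcon
    push_neg at hcon
    have : ‖v‖ = 0 := le_antisymm hcon (norm_nonneg v)
    rw [this] at hvh
    nlinarith
  obtain ⟨e, hev, he⟩ : ∃ e : EuclideanSpace ℝ (Fin (n + 1)), ‖v‖ • e = v ∧ ‖e‖ = 1 := by
    refine ⟨‖v‖⁻¹ • v, ?_, ?_⟩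
    · rw [smul_smul, mul_inv_cancel₀ hvpos.ne', one_smul]
    · rw [norm_smul, norm_inv, norm_norm, inv_mul_cancel₀ hvpos.ne']
  set e₀ : EuclideanSpace ℝ (Fin (n + 1)) := EuclideanSpace.single 0 1 with he₀def
  have he₀ : ‖e₀‖ = 1 := by
    rw [he₀def, EuclideanSpace.norm_single, norm_one]
  set f := Submodule.reflection (ℝ ∙ (e - e₀))ᗮ with hfdef
  have hfe : f e = e₀ := Submodule.reflection_sub (he.trans he₀.symm)
  set T : Set (EuclideanSpace ℝ (Fin (n + 1))) :=
    {u | ⟪e₀, u⟫ ∈ Set.Icc (-(‖v‖ * h) - r) r ∧ ‖u - ⟪e₀, u⟫ • e₀‖ ≤ r} with hTdef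
  have hcinner : Continuous fun u : EuclideanSpace ℝ (Fin (n + 1)) => ⟪e₀, u⟫ :=
    continuous_const.inner continuous_id
  have hTmeas : MeasurableSet T :=
    (measurableSet_Icc.preimage hcinner.measurable).inter
      (measurableSet_le ((continuous_id.sub (hcinner.smul continuous_const)).norm).measurable
        measurable_const)
  have hsub : {x : EuclideanSpace ℝ (Fin (n + 1)) |
      r ≤ ‖x‖ ∧ ∃ t ∈ Set.Icc (0:ℝ) h, ‖x + t • v‖ ≤ r} ⊆ ⇑f ⁻¹' T := by
    rintro x ⟨-, t, ⟨ht0, hth⟩, htx⟩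
    have htv : (t * ‖v‖) • e = t • v := by rw [mul_smul, hev]
    have hinner : ⟪e, x + t • v⟫ = ⟪e, x⟫ + t * ‖v‖ := by
      rw [inner_add_right, ← htv, real_inner_smul_right, real_inner_self_eq_norm_sq, he]
      ring
    have habs : |⟪e, x + t • v⟫| ≤ r := by
      calc |⟪e, x + t • v⟫| ≤ ‖e‖ * ‖x + t • v‖ := abs_real_inner_le_norm e _
        _ = ‖x + t • v‖ := by rw [he, one_mul]
        _ ≤ r := htx
    rw [abs_le] at habs
    have hc0 : 0 ≤ t * ‖v‖ := mul_nonneg ht0 hvpos.le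
    have hch : t * ‖v‖ ≤ ‖v‖ * h := by
      rw [mul_comm t]
      exact mul_le_mul_of_nonneg_left hth hvpos.le
    have h1 : ⟪e₀, f x⟫ = ⟪e, x⟫ := by
      rw [← hfe, LinearIsometryEquiv.inner_map_map]
    refine ⟨?_, ?_⟩
    · rw [Set.mem_Icc, h1]
      constructor <;> nlinarith [hinner, habs.1, habs.2]
    · have h2 : f x - ⟪e₀, f x⟫ • e₀ = f (x - ⟪e, x⟫ • e) := by
        rw [map_sub, LinearIsometryEquiv.map_smul, hfe, h1]
      rw [h2, LinearIsometryEquiv.norm_map]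
      have h3 : x - ⟪e, x⟫ • e = (x + t • v) - ⟪e, x + t • v⟫ • e := by
        rw [hinner, add_smul, htv]
        abel
      rw [h3]
      exact (proj_bound_aux he (x + t • v)).trans htx
  calc volume {x : EuclideanSpace ℝ (Fin (n + 1)) |
        r ≤ ‖x‖ ∧ ∃ t ∈ Set.Icc (0:ℝ) h, ‖x + t • v‖ ≤ r}
      ≤ volume (⇑f ⁻¹' T) := measure_mono hsub
    _ = volume T := f.measurePreserving.measure_preimage hTmeas.nullMeasurableSet
    _ = ENNReal.ofReal (r - (-(‖v‖ * h) - r)) *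
          (ENNReal.ofReal (r ^ n) * volume (Metric.ball (0 : EuclideanSpace ℝ (Fin n)) 1)) :=
        slab_volume n _ _ r hr.le
    _ = ENNReal.ofReal (‖v‖ * r ^ n * ω * h + 2 * ω * r ^ (n + 1)) := by
        have hL : (0:ℝ) ≤ r - (-(‖v‖ * h) - r) := by nlinarith
        rw [← ENNReal.ofReal_toReal hωfin, ← hωdef,
          ← ENNReal.ofReal_mul (by positivity : (0:ℝ) ≤ r ^ n),
          ← ENNReal.ofReal_mul hL]
        congr 1
        ring
end

section
/- Let h : [0,T] → [0,∞) be measurable and bounded, C > 0, a ≥ 0, and suppose h(t) ≤ a + C ∫₀ᵗ h(s)² ds for all t ∈ [0,T]. If T < 1/(Ca), then h(t) ≤ 1/(1/a − Ct) = a/(1 − Cat) for all t ∈ [0,T]. -/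
/-!
The function `φ t = a / (1 - C a t)` solves `φ t = a + C ∫₀ᵗ φ²`. On `[0, T]` both `h` and `φ`
are nonnegative and bounded by some `M`, so the excess `d = (h - φ)⁺` satisfies
`h² - φ² ≤ (h + φ) d ≤ 2 M d` and hence the linear inequality `d t ≤ 2 C M ∫₀ᵗ d`.
Iterating it gives `d t ≤ M (2 C M t)ⁿ / n!` for every `n`, so `d = 0`.
-/

open MeasureTheory Set Nat

lemma intervalIntegrable_of_abs_le {f : ℝ → ℝ} (hf : Measurable f) {K a b : ℝ}
    (hK : ∀ s ∈ uIcc a b, |f s| ≤ K) : IntervalIntegrable f volume a b :=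
  (Measure.integrableOn_of_bounded measure_Icc_lt_top.ne hf.aestronglyMeasurable
    ((ae_restrict_mem measurableSet_Icc).mono hK)).intervalIntegrable

section LinearGronwall

variable {d : ℝ → ℝ} {T K M : ℝ}

lemma le_pow_div_factorial_of_le_mul_integral (hK : 0 ≤ K)
    (hint : IntervalIntegrable d volume 0 T) (hM : ∀ t ∈ Icc 0 T, d t ≤ M)
    (hle : ∀ t ∈ Icc 0 T, d t ≤ K * ∫ s in 0..t, d s) (n : ℕ) :
    ∀ t ∈ Icc 0 T, d t ≤ M * (K * t) ^ n / n ! := by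
  induction n with
  | zero => simpa using hM
  | succ n ih =>
    intro t ht
    have hint_le : ∫ s in 0..t, d s ≤ ∫ s in 0..t, M * K ^ n / n ! * s ^ n := by
      refine intervalIntegral.integral_mono_on ht.1
        (hint.mono_set (uIcc_subset_uIcc left_mem_uIcc (Icc_subset_uIcc ht)))
        (Continuous.intervalIntegrable (by fun_prop) _ _) fun s hs => ?_
      calc d s ≤ M * (K * s) ^ n / n ! := ih s (Icc_subset_Icc_right ht.2 hs)
        _ = M * K ^ n / n ! * s ^ n := by ring
    calc d t ≤ K * ∫ s in 0..t, d s := hle t ht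
      _ ≤ K * ∫ s in 0..t, M * K ^ n / n ! * s ^ n := by gcongr
      _ = M * (K * t) ^ (n + 1) / (n + 1)! := by
        rw [intervalIntegral.integral_const_mul, integral_pow, factorial_succ]
        push_cast
        field_simp
        ring

lemma nonpos_of_le_mul_integral (hK : 0 ≤ K)
    (hint : IntervalIntegrable d volume 0 T) (hM : ∀ t ∈ Icc 0 T, d t ≤ M)
    (hle : ∀ t ∈ Icc 0 T, d t ≤ K * ∫ s in 0..t, d s) :
    ∀ t ∈ Icc 0 T, d t ≤ 0 := fun t ht =>
  have hlim : Filter.Tendsto (fun n : ℕ => M * (K * t) ^ n / n !) Filter.atTop (nhds 0) := by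
    simpa [mul_div_assoc] using (FloorSemiring.tendsto_pow_div_factorial_atTop (K * t)).const_mul M
  ge_of_tendsto' hlim fun n => le_pow_div_factorial_of_le_mul_integral hK hint hM hle n t ht

end LinearGronwall

lemma sq_sub_sq_le_mul_max_sub_zero {x y B : ℝ} (hx : 0 ≤ x) (hy : 0 ≤ y) (hB : x + y ≤ B) :
    x ^ 2 - y ^ 2 ≤ B * max (x - y) 0 :=
  calc x ^ 2 - y ^ 2 = (x + y) * (x - y) := by ring
    _ ≤ (x + y) * max (x - y) 0 := by gcongr; exact le_max_left _ _
    _ ≤ B * max (x - y) 0 := by gcongr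

section Comparison

variable {T C a M : ℝ} {h u : ℝ → ℝ}

lemma max_sub_le_mul_integral_max_sub (hC : 0 ≤ C)
    (hh : IntervalIntegrable (fun s => h s ^ 2) volume 0 T)
    (hu : IntervalIntegrable (fun s => u s ^ 2) volume 0 T)
    (hd : IntervalIntegrable (fun s => max (h s - u s) 0) volume 0 T)
    (hh_mem : ∀ t ∈ Icc 0 T, h t ∈ Icc 0 M) (hu_mem : ∀ t ∈ Icc 0 T, u t ∈ Icc 0 M)
    (hsub : ∀ t ∈ Icc 0 T, h t ≤ a + C * ∫ s in 0..t, h s ^ 2)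
    (hsuper : ∀ t ∈ Icc 0 T, a + C * ∫ s in 0..t, u s ^ 2 ≤ u t) :
    ∀ t ∈ Icc 0 T, max (h t - u t) 0 ≤ C * (2 * M) * ∫ s in 0..t, max (h s - u s) 0 := by
  intro t ht
  have hsubset : uIcc 0 t ⊆ uIcc 0 T := uIcc_subset_uIcc left_mem_uIcc (Icc_subset_uIcc ht)
  have hdiff : h t - u t ≤ C * ∫ s in 0..t, (h s ^ 2 - u s ^ 2) := by
    rw [intervalIntegral.integral_sub (hh.mono_set hsubset) (hu.mono_set hsubset)]
    linarith [hsub t ht, hsuper t ht]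
  have hmono : ∫ s in 0..t, (h s ^ 2 - u s ^ 2) ≤ ∫ s in 0..t, 2 * M * max (h s - u s) 0 := by
    refine intervalIntegral.integral_mono_on ht.1 ((hh.sub hu).mono_set hsubset)
      ((hd.mono_set hsubset).const_mul _) fun s hs => ?_
    have hs' := Icc_subset_Icc_right ht.2 hs
    exact sq_sub_sq_le_mul_max_sub_zero (hh_mem s hs').1 (hu_mem s hs').1
      (by linarith [(hh_mem s hs').2, (hu_mem s hs').2])
  rw [intervalIntegral.integral_const_mul] at hmono
  have hd_nonneg : 0 ≤ ∫ s in 0..t, max (h s - u s) 0 :=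
    intervalIntegral.integral_nonneg ht.1 fun s _ => le_max_right _ _
  have hM : 0 ≤ M := (hh_mem t ht).1.trans (hh_mem t ht).2
  refine max_le ?_ (by positivity)
  calc h t - u t ≤ C * ∫ s in 0..t, (h s ^ 2 - u s ^ 2) := hdiff
    _ ≤ C * (2 * M * ∫ s in 0..t, max (h s - u s) 0) := by gcongr
    _ = C * (2 * M) * ∫ s in 0..t, max (h s - u s) 0 := by ring

theorem le_of_le_add_integral_sq_of_add_integral_sq_le (hC : 0 ≤ C)
    (hh : Measurable h) (hu : Measurable u)
    (hh_mem : ∀ t ∈ Icc 0 T, h t ∈ Icc 0 M) (hu_mem : ∀ t ∈ Icc 0 T, u t ∈ Icc 0 M)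
    (hsub : ∀ t ∈ Icc 0 T, h t ≤ a + C * ∫ s in 0..t, h s ^ 2)
    (hsuper : ∀ t ∈ Icc 0 T, a + C * ∫ s in 0..t, u s ^ 2 ≤ u t) :
    ∀ t ∈ Icc 0 T, h t ≤ u t := by
  intro t ht
  have hT : 0 ≤ T := ht.1.trans ht.2
  have hM : 0 ≤ M := (hh_mem t ht).1.trans (hh_mem t ht).2
  have hint {f : ℝ → ℝ} (hf : Measurable f) (K : ℝ) (hK : ∀ s ∈ Icc 0 T, |f s| ≤ K) :
      IntervalIntegrable f volume 0 T :=
    intervalIntegrable_of_abs_le hf (by rwa [uIcc_of_le hT])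
  have hsq_int {f : ℝ → ℝ} (hf : Measurable f) (hfM : ∀ s ∈ Icc 0 T, f s ∈ Icc 0 M) :
      IntervalIntegrable (fun s => f s ^ 2) volume 0 T :=
    hint (hf.pow_const 2) (M ^ 2) fun s hs => by
      rw [abs_of_nonneg (sq_nonneg _)]
      exact pow_le_pow_left₀ (hfM s hs).1 (hfM s hs).2 2
  have hd_le : ∀ s ∈ Icc 0 T, max (h s - u s) 0 ≤ M := fun s hs =>
    max_le (by linarith [(hh_mem s hs).2, (hu_mem s hs).1]) hM
  have hd_int : IntervalIntegrable (fun s => max (h s - u s) 0) volume 0 T :=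
    hint ((hh.sub hu).max measurable_const) M fun s hs => by
      rw [abs_of_nonneg (le_max_right _ _)]; exact hd_le s hs
  have hexcess := nonpos_of_le_mul_integral (by positivity) hd_int hd_le
    (max_sub_le_mul_integral_max_sub hC (hsq_int hh hh_mem) (hsq_int hu hu_mem) hd_int
      hh_mem hu_mem hsub hsuper) t ht
  linarith [le_max_left (h t - u t) 0]

end Comparison

/-- The solution of `y' = C y²`, `y 0 = a`, which blows up at `t = 1 / (C a)`. -/
noncomputable def quadraticGronwallBound (C a t : ℝ) : ℝ := a / (1 - C * a * t)

section QuadraticGronwallBound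

variable {C a s t : ℝ}

lemma quadraticGronwallBound_nonneg (ha : 0 ≤ a) (ht : C * a * t < 1) :
    0 ≤ quadraticGronwallBound C a t :=
  div_nonneg ha (by linarith)

lemma quadraticGronwallBound_le_of_le (ha : 0 ≤ a) (hCa : 0 ≤ C * a) (hst : s ≤ t)
    (ht : C * a * t < 1) : quadraticGronwallBound C a s ≤ quadraticGronwallBound C a t :=
  div_le_div_of_nonneg_left ha (by linarith) (by nlinarith)

lemma hasDerivAt_quadraticGronwallBound (ht : 1 - C * a * t ≠ 0) :
    HasDerivAt (quadraticGronwallBound C a) (C * quadraticGronwallBound C a t ^ 2) t := by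
  have hden : HasDerivAt (fun s => 1 - C * a * s) (-(C * a)) t := by
    simpa using ((hasDerivAt_id t).const_mul (C * a)).const_sub 1
  refine ((hasDerivAt_const t a).div hden ht).congr_deriv ?_
  simp only [quadraticGronwallBound]
  field_simp
  ring

lemma quadraticGronwallBound_eq_add_integral_sq (ht : ∀ s ∈ uIcc 0 t, 1 - C * a * s ≠ 0) :
    quadraticGronwallBound C a t = a + C * ∫ s in 0..t, quadraticGronwallBound C a s ^ 2 := by
  have hderiv := fun s hs => hasDerivAt_quadraticGronwallBound (ht s hs)
  have hcont : ContinuousOn (fun s => C * quadraticGronwallBound C a s ^ 2) (uIcc 0 t) :=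
    continuousOn_const.mul <|
      ContinuousOn.pow (fun s hs => (hderiv s hs).continuousAt.continuousWithinAt) 2
  rw [← intervalIntegral.integral_const_mul,
    intervalIntegral.integral_eq_sub_of_hasDerivAt hderiv hcont.intervalIntegrable]
  simp [quadraticGronwallBound]

end QuadraticGronwallBound

theorem stmt16_general (T C a : ℝ) (hC : 0 < C) (ha : 0 ≤ a)
    (h : ℝ → ℝ) (hmeas : Measurable h)
    (hnn : ∀ t ∈ Set.Icc (0:ℝ) T, 0 ≤ h t)
    (hbdd : ∃ M, ∀ t ∈ Set.Icc (0:ℝ) T, h t ≤ M)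
    (hineq : ∀ t ∈ Set.Icc (0:ℝ) T, h t ≤ a + C * ∫ s in (0:ℝ)..t, (h s)^2)
    (hsmall : C * a * T < 1) :
    ∀ t ∈ Set.Icc (0:ℝ) T, h t ≤ a / (1 - C * a * t) := by
  obtain ⟨M, hM⟩ := hbdd
  have hCa : 0 ≤ C * a := mul_nonneg hC.le ha
  have hsmall_of_le : ∀ s ≤ T, C * a * s < 1 := fun s hs => by nlinarith
  refine le_of_le_add_integral_sq_of_add_integral_sq_le (M := max M (quadraticGronwallBound C a T))
    hC.le hmeas (by fun_prop)
    (fun t ht => ⟨hnn t ht, le_max_of_le_left (hM t ht)⟩)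
    (fun t ht => ⟨quadraticGronwallBound_nonneg ha (hsmall_of_le t ht.2),
      le_max_of_le_right (quadraticGronwallBound_le_of_le ha hCa ht.2 hsmall)⟩)
    hineq fun t ht => (quadraticGronwallBound_eq_add_integral_sq fun s hs =>
      (sub_pos.2 (hsmall_of_le s (hs.2.trans (max_le (ht.1.trans ht.2) ht.2)))).ne').ge

/-- Quadratic Gronwall comparison: if `h ≤ a + C ∫₀ᵗ h²` on `[0,T]` with
`C a T < 1` (i.e. `T < 1/(Ca)`), then `h(t) ≤ a/(1 − C a t)` on `[0,T]`. -/
theorem stmt16 (T C a : ℝ) (hT : 0 ≤ T) (hC : 0 < C) (ha : 0 ≤ a)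
    (h : ℝ → ℝ) (hmeas : Measurable h)
    (hnn : ∀ t ∈ Set.Icc (0:ℝ) T, 0 ≤ h t)
    (hbdd : ∃ M, ∀ t ∈ Set.Icc (0:ℝ) T, h t ≤ M)
    (hineq : ∀ t ∈ Set.Icc (0:ℝ) T, h t ≤ a + C * ∫ s in (0:ℝ)..t, (h s)^2)
    (hsmall : C * a * T < 1) :
    ∀ t ∈ Set.Icc (0:ℝ) T, h t ≤ a / (1 - C * a * t) :=
  stmt16_general T C a hC ha h hmeas hnn hbdd hineq hsmall
end
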